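/- In the quotient ring S̄ = S/(m_{(a,b)} : a ≠ b), for integers k ≥ l > 0 and any partition λ = (1^{α₁} 2^{α₂}...): m̄_{(k,l)(λ,0)(0,1)^{|λ|+k−l}} = Σ_μ [ (−1)^l · l! · (β_{|λ|−|μ|+k}+1) / ( (l−ℓ(λ)+ℓ(μ))! · ∏ᵢ (αᵢ−βᵢ)! ) ] · m̄_{(|λ|−|μ|+k,0)(μ,0)(0,1)^{|λ|+k}}, where μ = (1^{β₁} 2^{β₂}...) runs over partitions with μ ⪯ λ and ℓ(λ)−ℓ(μ) ≤ l (and 1/x! is interpreted as 0 when x < 0). -/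

import Mathlib

/-!
Multiplying `m_{(k,l)}` by `m_M` with `M = (λ,0)(0,1)^s` puts the part `(k,l)` in a column of its
own, or adds it to a part `(0,1)` or to a part `(v,0)` of `M`. For `k ≠ l` the product vanishes in
`S̄`, which expresses the function with the part `(k,l+1)` through those with the parts `(k,l)` and
`(k+v,l)`. Induction on `l`, from the trivial case `l = 0`, reduces the theorem to a recursion of
the coefficients in `l`; writing `l!/(l-d)!` as the falling factorial `(l)_d`, that recursion is
Pascal's rule `(l+1)_d = (l)_d + d (l)_{d-1}`, the factor `d = Σ_v (α_v - β_v)` coming from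
`(α_v - β_v)! = (α_v - β_v) (α_v - 1 - β_v)!`. The multiplicities produced by the product are
absorbed by weighting `m_Λ` with the multiplicity of its distinguished part: this weight is `1` for
`l > 0`, and at `l = 0` it is the factor `β_{|λ|-|μ|+k} + 1`.
-/

/-- The monomial MacMahon symmetric function `m_Λ` attached to a bipartite partition
`Λ` (a multiset of vectors in `ℕ×ℕ`), as a formal power series in two families of
variables `xᵢ = X (i,0)`, `yᵢ = X (i,1)`: the sum, with coefficients `0` or `1`, of all
monomials whose multiset of exponent pairs equals `Λ`. -/
noncomputable def mm (Λ : Multiset (ℕ × ℕ)) : MvPowerSeries (ℕ × Fin 2) ℂ :=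
  fun d => if (d.support.image Prod.fst).val.map
      (fun i => (d (i, 0), d (i, 1))) = Λ then 1 else 0

/-- The ideal of `S` generated by the `m_{(a,b)}` with `a ≠ b`, as a `ℂ`-submodule:
the span of the products `m_{(a,b)} · m_Λ`. -/
noncomputable def Jbar : Submodule ℂ (MvPowerSeries (ℕ × Fin 2) ℂ) :=
  Submodule.span ℂ {x | ∃ (a b : ℕ) (Λ : Multiset (ℕ × ℕ)),
    a ≠ b ∧ (0, 0) ∉ Λ ∧ x = mm {(a, b)} * mm Λ}

namespace MacMahon

open Nat

def column (d : (ℕ × Fin 2) →₀ ℕ) (i : ℕ) : ℕ × ℕ := (d (i, 0), d (i, 1))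

def columns (d : (ℕ × Fin 2) →₀ ℕ) : Finset ℕ := d.support.image Prod.fst

def pattern (d : (ℕ × Fin 2) →₀ ℕ) : Multiset (ℕ × ℕ) := (columns d).val.map (column d)

theorem mm_apply (Λ : Multiset (ℕ × ℕ)) (d : (ℕ × Fin 2) →₀ ℕ) :
    mm Λ d = if pattern d = Λ then 1 else 0 := rfl

theorem ext_column {d e : (ℕ × Fin 2) →₀ ℕ} (h : ∀ i, column d i = column e i) : d = e := by
  ext ⟨i, t⟩
  fin_cases t
  exacts [congrArg Prod.fst (h i), congrArg Prod.snd (h i)]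

theorem column_sub (d e : (ℕ × Fin 2) →₀ ℕ) (i : ℕ) :
    column (d - e) i = column d i - column e i := rfl

theorem mem_columns {d : (ℕ × Fin 2) →₀ ℕ} {i : ℕ} : i ∈ columns d ↔ column d i ≠ 0 := by
  simp only [columns, Finset.mem_image, Finsupp.mem_support_iff, column, ne_eq, Prod.mk_eq_zero,
    not_and_or, Prod.exists, exists_and_right, exists_eq_right]
  constructor
  · rintro ⟨t, ht⟩
    fin_cases t
    exacts [Or.inl ht, Or.inr ht]
  · rintro (h | h)
    exacts [⟨0, h⟩, ⟨1, h⟩]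

theorem zero_notMem_pattern (d : (ℕ × Fin 2) →₀ ℕ) : (0 : ℕ × ℕ) ∉ pattern d := by
  simp only [pattern, Multiset.mem_map, Finset.mem_val, not_exists, not_and]
  exact fun i hi => mem_columns.mp hi

theorem pattern_eq_filter {d : (ℕ × Fin 2) →₀ ℕ} {s : Finset ℕ} (h : columns d ⊆ s) :
    pattern d = (s.val.map (column d)).filter (· ≠ 0) := by
  rw [Multiset.filter_map, pattern, ← Finset.filter_val]
  congr 2
  ext i
  simp only [Finset.mem_filter, Function.comp_apply, ← mem_columns]
  exact ⟨fun hi => ⟨h hi, hi⟩, And.right⟩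

noncomputable def columnSingle (i : ℕ) (p : ℕ × ℕ) : (ℕ × Fin 2) →₀ ℕ :=
  Finsupp.single (i, 0) p.1 + Finsupp.single (i, 1) p.2

theorem column_columnSingle (i j : ℕ) (p : ℕ × ℕ) :
    column (columnSingle i p) j = if j = i then p else 0 := by
  split_ifs with h
  · subst h; simp [column, columnSingle]
  · simp [column, columnSingle, Ne.symm h]

theorem le_iff_column_le {d e : (ℕ × Fin 2) →₀ ℕ} : d ≤ e ↔ ∀ i, column d i ≤ column e i := by
  simp only [Finsupp.le_def, Prod.forall, Fin.forall_fin_two, column, Prod.mk_le_mk]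

theorem columnSingle_le_iff {i : ℕ} {p : ℕ × ℕ} {d : (ℕ × Fin 2) →₀ ℕ} :
    columnSingle i p ≤ d ↔ p ≤ column d i := by
  simp only [le_iff_column_le, column_columnSingle]
  refine ⟨fun h => by simpa using h i, fun h j => ?_⟩
  split_ifs with hj
  exacts [hj ▸ h, zero_le]

theorem columns_columnSingle (i : ℕ) {p : ℕ × ℕ} (hp : p ≠ 0) :
    columns (columnSingle i p) = {i} := by
  ext j
  simp [mem_columns, column_columnSingle, hp]

theorem pattern_columnSingle (i : ℕ) {p : ℕ × ℕ} (hp : p ≠ 0) :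
    pattern (columnSingle i p) = {p} := by
  simp [pattern, columns_columnSingle i hp, column_columnSingle]

theorem pattern_eq_singleton_iff {e : (ℕ × Fin 2) →₀ ℕ} {p : ℕ × ℕ} (hp : p ≠ 0) :
    pattern e = {p} ↔ ∃ i, e = columnSingle i p := by
  refine ⟨fun h => ?_, fun ⟨i, he⟩ => he ▸ pattern_columnSingle i hp⟩
  obtain ⟨i, hi⟩ : ∃ i, columns e = {i} :=
    Finset.card_eq_one.mp (by simpa [pattern] using congrArg Multiset.card h)
  have hpi : column e i = p := by simpa [pattern, hi] using h
  refine ⟨i, ext_column fun j => ?_⟩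
  rw [column_columnSingle]
  split_ifs with hj
  · exact hj ▸ hpi
  · by_contra hne
    exact hj (Finset.mem_singleton.mp (hi ▸ mem_columns.mpr hne))

theorem pattern_sub_columnSingle {d : (ℕ × Fin 2) →₀ ℕ} {i : ℕ} (hi : i ∈ columns d)
    (p : ℕ × ℕ) :
    pattern (d - columnSingle i p) =
      ((column d i - p) ::ₘ (pattern d).erase (column d i)).filter (· ≠ 0) := by
  have hsub : columns (d - columnSingle i p) ⊆ columns d := fun j hj => by
    rw [mem_columns, column_sub] at hj
    exact mem_columns.mpr fun h => hj (by rw [h, zero_tsub])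
  have hval : (columns d).val = i ::ₘ ((columns d).erase i).val := by
    rw [Finset.erase_val, Multiset.cons_erase (Finset.mem_val.mpr hi)]
  have hrest : ((columns d).erase i).val.map (column (d - columnSingle i p)) =
      ((columns d).erase i).val.map (column d) :=
    Multiset.map_congr rfl fun j hj => by
      rw [column_sub, column_columnSingle, if_neg (Finset.ne_of_mem_erase hj), tsub_zero]
  rw [pattern_eq_filter hsub, hval, Multiset.map_cons, hrest, column_sub, column_columnSingle,
    if_pos rfl, pattern, hval, Multiset.map_cons, Multiset.erase_cons_head]

theorem columnSingle_injective {p : ℕ × ℕ} (hp : p ≠ 0) :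
    Function.Injective fun i => columnSingle i p := fun i j h => by
  simpa [columns_columnSingle _ hp] using congrArg columns h

theorem coeff_mm_singleton_mul {p : ℕ × ℕ} (hp : p ≠ 0) (g : MvPowerSeries (ℕ × Fin 2) ℂ)
    (d : (ℕ × Fin 2) →₀ ℕ) :
    (mm {p} * g) d =
      ∑ i ∈ columns d, if columnSingle i p ≤ d then g (d - columnSingle i p) else 0 := by
  have hmul : (mm {p} * g) d = ∑ x ∈ Finset.HasAntidiagonal.antidiagonal d, mm {p} x.1 * g x.2 :=
    MvPowerSeries.coeff_mul d (mm {p}) g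
  simp only [hmul, mm_apply, ite_mul, one_mul, zero_mul]
  rw [← Finset.sum_filter, ← Finset.sum_filter]
  refine (Finset.sum_bij (fun i _ => (columnSingle i p, d - columnSingle i p)) ?_ ?_ ?_ ?_).symm
  · intro i hi
    rw [Finset.mem_filter] at hi ⊢
    exact ⟨Finset.HasAntidiagonal.mem_antidiagonal.mpr (add_tsub_cancel_of_le hi.2),
      pattern_columnSingle i hp⟩
  · intro i _ j _ h
    exact columnSingle_injective hp (congrArg Prod.fst h)
  · rintro ⟨e, f⟩ hx
    rw [Finset.mem_filter, Finset.HasAntidiagonal.mem_antidiagonal] at hx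
    obtain ⟨hsum, he⟩ := hx
    obtain ⟨i, rfl⟩ := (pattern_eq_singleton_iff hp).mp he
    have hle : columnSingle i p ≤ d := hsum ▸ le_self_add
    refine ⟨i, Finset.mem_filter.mpr ⟨mem_columns.mpr ?_, hle⟩, ?_⟩
    · exact fun h0 => hp (nonpos_iff_eq_zero.mp (h0 ▸ columnSingle_le_iff.mp hle))
    · rw [← hsum, add_tsub_cancel_left]
  · intro i _
    rfl

theorem filter_cons_erase_eq_iff {α : Type*} [Zero α] [DecidableEq α] {N M : Multiset α}
    {q s : α} (hN : 0 ∉ N) (hM : 0 ∉ M) (hq : q ∈ N) :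
    (s ::ₘ N.erase q).filter (· ≠ 0) = M ↔ s ∈ insert 0 M.toFinset ∧ N = q ::ₘ M.erase s := by
  have hNq : (N.erase q).filter (· ≠ 0) = N.erase q :=
    Multiset.filter_eq_self.mpr fun x hx h0 => hN (h0 ▸ Multiset.mem_of_mem_erase hx)
  rw [Multiset.filter_cons, hNq]
  by_cases hs : s = 0
  · subst hs
    simp only [ne_eq, not_true_eq_false, if_false, zero_add, Finset.mem_insert, true_or,
      true_and, Multiset.erase_of_notMem hM]
    constructor
    · rintro rfl
      exact (Multiset.cons_erase hq).symm
    · rintro rfl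
      exact Multiset.erase_cons_head q M
  · simp only [ne_eq, hs, not_false_eq_true, if_true, Finset.mem_insert, Multiset.mem_toFinset,
      false_or, Multiset.singleton_add]
    constructor
    · rintro rfl
      rw [Multiset.erase_cons_head, Multiset.cons_erase hq]
      exact ⟨Multiset.mem_cons_self s _, rfl⟩
    · rintro ⟨hsM, rfl⟩
      rw [Multiset.erase_cons_head, Multiset.cons_erase hsM]

theorem sum_map_ite_eq_count {α : Type*} [DecidableEq α] (N : Multiset α) (x : α) :
    (N.map fun q => if x = q then (1 : ℂ) else 0).sum = N.count x := by
  simp +contextual [Finset.sum_multiset_map_count, Multiset.count_eq_zero_of_notMem]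

theorem sum_columns_eq_sum_pattern (d : (ℕ × Fin 2) →₀ ℕ) (F : ℕ × ℕ → ℂ) :
    ∑ i ∈ columns d, F (column d i) = ((pattern d).map F).sum := by
  rw [pattern, Multiset.map_map]
  rfl

/-- The part `p` either forms a column of its own (`r = 0`) or is added to a part `r` of `M`. -/
theorem mm_singleton_mul {p : ℕ × ℕ} (hp : p ≠ 0) {M : Multiset (ℕ × ℕ)} (hM : (0 : ℕ × ℕ) ∉ M) :
    mm {p} * mm M = ∑ r ∈ insert 0 M.toFinset,
      (((r + p) ::ₘ M.erase r).count (r + p) : ℂ) • mm ((r + p) ::ₘ M.erase r) := by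
  funext d
  have hcol : ∀ q ∈ pattern d,
      (if p ≤ q ∧ ((q - p) ::ₘ (pattern d).erase q).filter (· ≠ 0) = M then (1 : ℂ) else 0) =
        ∑ r ∈ insert 0 M.toFinset,
          if r + p = q ∧ pattern d = (r + p) ::ₘ M.erase r then 1 else 0 := by
    intro q hq
    by_cases hpq : p ≤ q
    · obtain ⟨s, rfl⟩ : ∃ s, q = s + p := ⟨q - p, (tsub_add_cancel_of_le hpq).symm⟩
      simp only [add_tsub_cancel_right, filter_cons_erase_eq_iff (zero_notMem_pattern d) hM hq,
        add_left_inj, ite_and, Finset.sum_ite_eq', if_pos hpq]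
    · rw [if_neg fun h => hpq h.1]
      refine (Finset.sum_eq_zero fun r _ => if_neg ?_).symm
      rintro ⟨rfl, -⟩
      exact hpq le_add_self
  calc (mm {p} * mm M) d
      = ∑ i ∈ columns d, if columnSingle i p ≤ d then mm M (d - columnSingle i p) else 0 :=
        coeff_mm_singleton_mul hp _ d
    _ = ((pattern d).map fun q => if p ≤ q ∧
          ((q - p) ::ₘ (pattern d).erase q).filter (· ≠ 0) = M then (1 : ℂ) else 0).sum := by
        rw [← sum_columns_eq_sum_pattern]
        refine Finset.sum_congr rfl fun i hi => ?_
        simp only [columnSingle_le_iff, mm_apply, pattern_sub_columnSingle hi, ite_and]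
    _ = ∑ r ∈ insert 0 M.toFinset, ((pattern d).map fun q =>
          if r + p = q ∧ pattern d = (r + p) ::ₘ M.erase r then (1 : ℂ) else 0).sum := by
        rw [Multiset.map_congr rfl hcol, Finset.sum_eq_multiset_sum, Multiset.sum_map_sum_map]
        rfl
    _ = ∑ r ∈ insert 0 M.toFinset,
          (((r + p) ::ₘ M.erase r).count (r + p) : ℂ) * mm ((r + p) ::ₘ M.erase r) d := by
        refine Finset.sum_congr rfl fun r _ => ?_
        rw [mm_apply]
        by_cases hN : pattern d = (r + p) ::ₘ M.erase r
        · simp only [hN, and_true, if_true, mul_one, sum_map_ite_eq_count]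
        · simp [hN]
    _ = _ := (map_sum (MvPowerSeries.coeff d)
          (fun r => (((r + p) ::ₘ M.erase r).count (r + p) : ℂ) • mm ((r + p) ::ₘ M.erase r))
          _).symm

def partWithOnes (lam : Multiset ℕ) (s : ℕ) : Multiset (ℕ × ℕ) :=
  lam.map (fun i => (i, 0)) + Multiset.replicate s (0, 1)

theorem mem_partWithOnes {lam : Multiset ℕ} {s : ℕ} {x : ℕ × ℕ} :
    x ∈ partWithOnes lam s ↔ x.2 = 0 ∧ x.1 ∈ lam ∨ s ≠ 0 ∧ x = (0, 1) := by
  rcases x with ⟨a, b⟩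
  simp [partWithOnes, Multiset.mem_replicate, and_comm, eq_comm]

theorem zero_notMem_partWithOnes {lam : Multiset ℕ} (h0 : 0 ∉ lam) (s : ℕ) :
    (0 : ℕ × ℕ) ∉ partWithOnes lam s := by
  simp [mem_partWithOnes, h0, Prod.ext_iff]

theorem count_partWithOnes_left (lam : Multiset ℕ) (s x : ℕ) :
    (partWithOnes lam s).count (x, 0) = lam.count x := by
  rw [partWithOnes, Multiset.count_add, Multiset.count_replicate, if_neg (by simp),
    Multiset.count_map_eq_count' _ _ (Prod.mk_left_injective 0), add_zero]

theorem partWithOnes_erase_left {lam : Multiset ℕ} {v : ℕ} (hv : v ∈ lam) (s : ℕ) :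
    (partWithOnes lam s).erase (v, 0) = partWithOnes (lam.erase v) s := by
  rw [partWithOnes, Multiset.erase_add_left_pos _ (Multiset.mem_map_of_mem _ hv),
    ← Multiset.map_erase _ (Prod.mk_left_injective 0), partWithOnes]

theorem partWithOnes_succ_erase (lam : Multiset ℕ) (s : ℕ) :
    (partWithOnes lam (s + 1)).erase (0, 1) = partWithOnes lam s := by
  rw [partWithOnes, Multiset.replicate_succ,
    Multiset.erase_add_right_pos _ (Multiset.mem_cons_self _ _), Multiset.erase_cons_head,
    partWithOnes]

theorem toFinset_partWithOnes_succ (lam : Multiset ℕ) (s : ℕ) :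
    (partWithOnes lam (s + 1)).toFinset =
      insert (0, 1) (lam.toFinset.map (Function.Embedding.sectL ℕ 0)) := by
  ext ⟨a, b⟩
  simp only [Multiset.mem_toFinset, mem_partWithOnes, Finset.mem_insert, Finset.mem_map,
    Function.Embedding.sectL_apply, Prod.mk.injEq]
  constructor
  · rintro (⟨rfl, ha⟩ | ⟨-, rfl, rfl⟩)
    exacts [Or.inr ⟨a, ha, rfl, rfl⟩, Or.inl ⟨rfl, rfl⟩]
  · rintro (⟨rfl, rfl⟩ | ⟨a, ha, rfl, rfl⟩)
    exacts [Or.inr ⟨s.succ_ne_zero, rfl, rfl⟩, Or.inl ⟨rfl, ha⟩]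

def shape (k l : ℕ) (lam : Multiset ℕ) : Multiset (ℕ × ℕ) :=
  (k, l) ::ₘ partWithOnes lam (lam.sum + k - l)

/-- The form in which `m_{shape k l λ}` arises in the products of `mm_singleton_mul`. -/
noncomputable def weightedMm (k l : ℕ) (lam : Multiset ℕ) : MvPowerSeries (ℕ × Fin 2) ℂ :=
  ((shape k l lam).count (k, l) : ℂ) • mm (shape k l lam)

theorem mm_singleton_mul_partWithOnes {k l : ℕ} (hlk : l < k) {lam : Multiset ℕ}
    (h0 : 0 ∉ lam) :
    mm {(k, l)} * mm (partWithOnes lam (lam.sum + k - l)) =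
      weightedMm k l lam + weightedMm k (l + 1) lam +
        ∑ v ∈ lam.toFinset, weightedMm (k + v) l (lam.erase v) := by
  obtain ⟨s, hs⟩ : ∃ s, lam.sum + k - l = s + 1 := ⟨lam.sum + k - l - 1, by omega⟩
  have hne : (0 : ℕ × ℕ) ∉ insert (0, 1) (lam.toFinset.map (Function.Embedding.sectL ℕ 0)) := by
    simpa [Prod.ext_iff] using h0
  rw [mm_singleton_mul (by simp; omega) (zero_notMem_partWithOnes h0 _), hs,
    toFinset_partWithOnes_succ, Finset.sum_insert hne, Finset.sum_insert (by simp),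
    Finset.sum_map, ← add_assoc]
  congr 1
  congr 1
  · rw [zero_add, Multiset.erase_of_notMem (zero_notMem_partWithOnes h0 _), ← hs]
    rfl
  · rw [partWithOnes_succ_erase, show ((0, 1) + (k, l) : ℕ × ℕ) = (k, l + 1) by simp [add_comm],
      show s = lam.sum + k - (l + 1) by omega]
    rfl
  · refine Finset.sum_congr rfl fun v hv => ?_
    have hv := Multiset.mem_toFinset.mp hv
    have hsum := Multiset.sum_erase hv
    rw [Function.Embedding.sectL_apply, partWithOnes_erase_left hv,
      show ((v, 0) + (k, l) : ℕ × ℕ) = (k + v, l) by simp [add_comm],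
      show s + 1 = (lam.erase v).sum + (k + v) - l by omega]
    rfl

theorem succ_descFactorial_eq_add (l d : ℕ) :
    (l + 1).descFactorial d = l.descFactorial d + d * l.descFactorial (d - 1) := by
  rcases d with _ | e
  · simp
  rw [succ_descFactorial_succ, descFactorial_succ, add_tsub_cancel_right, ← add_mul]
  rcases le_or_gt e l with h | h
  · congr 1
    omega
  · simp [descFactorial_eq_zero_iff_lt.mpr h]

theorem le_erase_iff_count_lt {μ lam : Multiset ℕ} (hμ : μ ≤ lam) {v : ℕ} (hv : v ∈ lam) :
    μ ≤ lam.erase v ↔ μ.count v < lam.count v := by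
  have hpos := Multiset.count_pos.mpr hv
  simp only [Multiset.le_iff_count] at hμ ⊢
  constructor
  · intro h
    have := h v
    rw [Multiset.count_erase_self] at this
    omega
  · intro h a
    rcases eq_or_ne a v with rfl | hav
    · rw [Multiset.count_erase_self]
      omega
    · rw [Multiset.count_erase_of_ne hav]
      exact hμ a

theorem sum_count_sub_eq_card_sub {μ lam : Multiset ℕ} (hμ : μ ≤ lam) :
    ∑ v ∈ lam.toFinset, (lam.count v - μ.count v) = lam.card - μ.card := by
  simp_rw [← Multiset.count_sub]
  rw [Multiset.sum_count_eq_card fun a ha => Multiset.mem_toFinset.mpr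
    (Multiset.mem_of_le tsub_le_self ha), Multiset.card_sub hμ]

theorem prod_factorial_count_sub_erase {μ lam : Multiset ℕ} {v : ℕ}
    (hv : μ.count v < lam.count v) :
    ∏ i ∈ lam.toFinset, (lam.count i - μ.count i)! =
      (lam.count v - μ.count v) *
        ∏ i ∈ (lam.erase v).toFinset, ((lam.erase v).count i - μ.count i)! := by
  have hvmem : v ∈ lam := Multiset.count_pos.mp (by omega)
  rw [Finset.prod_subset (Multiset.toFinset_subset.mpr (Multiset.erase_subset v lam))
    (f := fun i => ((lam.erase v).count i - μ.count i)!) fun i _ hi => by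
      rw [Multiset.count_eq_zero.mpr (by simpa using hi), zero_tsub, factorial_zero]]
  have hfac : ∀ i, (lam.count i - μ.count i)! =
      (if i = v then lam.count v - μ.count v else 1) * ((lam.erase v).count i - μ.count i)! := by
    intro i
    split_ifs with hi
    · subst hi
      rw [Multiset.count_erase_self, show lam.count i - 1 - μ.count i =
        lam.count i - μ.count i - 1 by omega, mul_factorial_pred (by omega)]
    · rw [one_mul, Multiset.count_erase_of_ne hi]
  simp_rw [hfac, Finset.prod_mul_distrib, Finset.prod_ite_eq',
    if_pos (Multiset.mem_toFinset.mpr hvmem)]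

/-- `l!/(l-d)!` appears as `l.descFactorial d`, which is `0` for `d > l`: the convention
`1/x! = 0` for `x < 0`. -/
noncomputable def reductionCoeff (l : ℕ) (lam μ : Multiset ℕ) : ℂ :=
  if μ ≤ lam then
    (-1) ^ l * l.descFactorial (lam.card - μ.card) /
      (∏ i ∈ lam.toFinset, (lam.count i - μ.count i)! : ℕ)
  else 0

theorem reductionCoeff_erase {l : ℕ} {lam μ : Multiset ℕ} {v : ℕ} (hv : v ∈ lam)
    (hμ : μ ≤ lam) :
    reductionCoeff l (lam.erase v) μ = (lam.count v - μ.count v : ℕ) *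
      ((-1) ^ l * l.descFactorial (lam.card - μ.card - 1) /
        (∏ i ∈ lam.toFinset, (lam.count i - μ.count i)! : ℕ)) := by
  by_cases hlt : μ.count v < lam.count v
  · have hcard : (lam.erase v).card - μ.card = lam.card - μ.card - 1 := by
      rw [Multiset.card_erase_of_mem hv, Nat.pred_eq_sub_one]
      omega
    have hne : ((lam.count v - μ.count v : ℕ) : ℂ) ≠ 0 := by
      exact_mod_cast (Nat.sub_pos_of_lt hlt).ne'
    rw [reductionCoeff, if_pos ((le_erase_iff_count_lt hμ hv).mpr hlt), hcard,
      prod_factorial_count_sub_erase hlt, Nat.cast_mul]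
    field_simp
  · have hzero : lam.count v - μ.count v = 0 := by omega
    rw [reductionCoeff, if_neg (mt (le_erase_iff_count_lt hμ hv).mp hlt), hzero,
      Nat.cast_zero, zero_mul]

theorem reductionCoeff_add_sum_erase_add_succ (l : ℕ) (lam μ : Multiset ℕ) :
    reductionCoeff l lam μ + ∑ v ∈ lam.toFinset, reductionCoeff l (lam.erase v) μ +
      reductionCoeff (l + 1) lam μ = 0 := by
  by_cases hμ : μ ≤ lam
  · have hD : ((∏ i ∈ lam.toFinset, (lam.count i - μ.count i)! : ℕ) : ℂ) ≠ 0 := by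
      exact_mod_cast Finset.prod_ne_zero_iff.mpr fun i _ => factorial_ne_zero _
    rw [Finset.sum_congr rfl fun v hv =>
        reductionCoeff_erase (l := l) (Multiset.mem_toFinset.mp hv) hμ,
      ← Finset.sum_mul, ← Nat.cast_sum, sum_count_sub_eq_card_sub hμ, reductionCoeff,
      reductionCoeff, if_pos hμ, if_pos hμ, succ_descFactorial_eq_add]
    push_cast
    field_simp
    ring
  · have hμv : ∀ v, ¬μ ≤ lam.erase v := fun v h => hμ (h.trans (Multiset.erase_le v lam))
    simp [reductionCoeff, hμ, hμv]

noncomputable def reduction (k l : ℕ) (lam : Multiset ℕ) : MvPowerSeries (ℕ × Fin 2) ℂ :=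
  ∑ μ ∈ lam.powerset.toFinset, reductionCoeff l lam μ • weightedMm (lam.sum + k - μ.sum) 0 μ

theorem reduction_zero (k : ℕ) (lam : Multiset ℕ) : reduction k 0 lam = weightedMm k 0 lam := by
  rw [reduction, Finset.sum_eq_single_of_mem lam (by simp)]
  · simp [reductionCoeff]
  · intro μ hμ hne
    have hμ : μ ≤ lam := by simpa using hμ
    have hlt : μ.card < lam.card := Multiset.card_lt_card (lt_of_le_of_ne hμ hne)
    simp [reductionCoeff, hμ, descFactorial_eq_zero_iff_lt.mpr (Nat.sub_pos_of_lt hlt)]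

theorem reduction_erase {k l v : ℕ} {lam : Multiset ℕ} (hv : v ∈ lam) :
    reduction (k + v) l (lam.erase v) = ∑ μ ∈ lam.powerset.toFinset,
      reductionCoeff l (lam.erase v) μ • weightedMm (lam.sum + k - μ.sum) 0 μ := by
  have hsum : (lam.erase v).sum + (k + v) = lam.sum + k := by
    have := Multiset.sum_erase hv
    omega
  rw [reduction, hsum]
  refine Finset.sum_subset (fun μ => by simpa using (le_trans · (Multiset.erase_le v lam)))
    fun μ _ hμ => ?_
  rw [reductionCoeff, if_neg (by simpa using hμ), zero_smul]

theorem reduction_succ (k l : ℕ) (lam : Multiset ℕ) :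
    reduction k (l + 1) lam =
      -(reduction k l lam + ∑ v ∈ lam.toFinset, reduction (k + v) l (lam.erase v)) := by
  rw [eq_neg_iff_add_eq_zero, add_comm, Finset.sum_congr rfl fun v hv =>
    reduction_erase (Multiset.mem_toFinset.mp hv), Finset.sum_comm, reduction, reduction,
    ← Finset.sum_add_distrib, ← Finset.sum_add_distrib]
  refine Finset.sum_eq_zero fun μ _ => ?_
  rw [← Finset.sum_smul, ← add_smul, ← add_smul, reductionCoeff_add_sum_erase_add_succ, zero_smul]

theorem weightedMm_sub_reduction_mem {k l : ℕ} (hlk : l ≤ k) {lam : Multiset ℕ} (h0 : 0 ∉ lam) :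
    weightedMm k l lam - reduction k l lam ∈ Jbar := by
  induction l generalizing k lam with
  | zero =>
    rw [reduction_zero, sub_self]
    exact Jbar.zero_mem
  | succ l ih =>
    have hgen : mm {(k, l)} * mm (partWithOnes lam (lam.sum + k - l)) ∈ Jbar :=
      Submodule.subset_span ⟨k, l, _, by omega, zero_notMem_partWithOnes h0 _, rfl⟩
    have hsplit : weightedMm k (l + 1) lam - reduction k (l + 1) lam =
        mm {(k, l)} * mm (partWithOnes lam (lam.sum + k - l)) -
          (weightedMm k l lam - reduction k l lam) -
          ∑ v ∈ lam.toFinset,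
            (weightedMm (k + v) l (lam.erase v) - reduction (k + v) l (lam.erase v)) := by
      rw [mm_singleton_mul_partWithOnes (by omega) h0, reduction_succ, Finset.sum_sub_distrib]
      abel
    rw [hsplit]
    refine Jbar.sub_mem (Jbar.sub_mem hgen (ih (by omega) h0)) (Jbar.sum_mem fun v _ => ?_)
    exact ih (by omega) fun h => h0 (Multiset.mem_of_mem_erase h)

theorem reductionCoeff_smul_weightedMm {k l : ℕ} {lam μ : Multiset ℕ} (hμ : μ ≤ lam) :
    reductionCoeff l lam μ • weightedMm (lam.sum + k - μ.sum) 0 μ =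
      if lam.card ≤ l + μ.card then
        (((-1 : ℂ) ^ l * (l ! : ℂ) * ((μ.count (lam.sum - μ.sum + k) : ℂ) + 1)) /
          (((l + μ.card - lam.card)! : ℂ) *
            ∏ i ∈ lam.toFinset, ((lam.count i - μ.count i)! : ℂ))) •
        mm ((lam.sum - μ.sum + k, 0) ::ₘ partWithOnes μ (lam.sum + k))
      else 0 := by
  have hsum : μ.sum ≤ lam.sum := by
    obtain ⟨u, rfl⟩ := Multiset.le_iff_exists_add.mp hμ
    simp
  have hcard := Multiset.card_le_card hμ
  have hshape : shape (lam.sum + k - μ.sum) 0 μ =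
      (lam.sum - μ.sum + k, 0) ::ₘ partWithOnes μ (lam.sum + k) := by
    rw [shape]
    congr 3 <;> omega
  rw [weightedMm, hshape, show lam.sum + k - μ.sum = lam.sum - μ.sum + k by omega,
    Multiset.count_cons_self, count_partWithOnes_left, smul_smul, reductionCoeff, if_pos hμ]
  split_ifs with h
  · rw [← Nat.factorial_mul_descFactorial (show lam.card - μ.card ≤ l by omega),
      show l - (lam.card - μ.card) = l + μ.card - lam.card by omega]
    have hf : ((l + μ.card - lam.card)! : ℂ) ≠ 0 := by exact_mod_cast factorial_ne_zero _
    congr 1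
    push_cast
    field_simp
  · rw [descFactorial_eq_zero_iff_lt.mpr (by omega)]
    simp

theorem weightedMm_eq_mm_of_pos {k l : ℕ} (hl : 0 < l) (hlk : l ≤ k) (lam : Multiset ℕ) :
    weightedMm k l lam = mm (shape k l lam) := by
  rw [weightedMm, shape, Multiset.count_cons_self, Multiset.count_eq_zero.mpr, zero_add,
    Nat.cast_one, one_smul]
  simp only [mem_partWithOnes, Prod.ext_iff]
  omega

end MacMahon

open MacMahon

open scoped Classical in
/-- In `S̄`, for `k ≥ l > 0` and a partition `λ = (1^{α₁}2^{α₂}…)`: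
`m̄_{(k,l)(λ,0)(0,1)^{|λ|+k−l}} = Σ_μ ((−1)^l l! (β_{|λ|−|μ|+k}+1) /
((l−ℓ(λ)+ℓ(μ))! ∏ᵢ (αᵢ−βᵢ)!)) m̄_{(|λ|−|μ|+k,0)(μ,0)(0,1)^{|λ|+k}}`, the sum over
partitions `μ ⪯ λ` with `ℓ(λ)−ℓ(μ) ≤ l` (the others vanish by the convention `1/x!=0`
for `x<0`); stated as membership of the difference in the ideal `(m_{(a,b)} : a ≠ b)`. -/
theorem stmt7 (k l : ℕ) (hl : 0 < l) (hkl : l ≤ k)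
    (lam : Multiset ℕ) (h0 : (0 : ℕ) ∉ lam) :
    mm ((k, l) ::ₘ (lam.map (fun i => (i, 0)) +
        Multiset.replicate (lam.sum + k - l) ((0 : ℕ), (1 : ℕ)))) -
      ∑ μ ∈ lam.powerset.toFinset,
        (if lam.card ≤ l + μ.card then
          (((-1 : ℂ) ^ l * (Nat.factorial l : ℂ) *
              ((μ.count (lam.sum - μ.sum + k) : ℂ) + 1)) /
            ((Nat.factorial (l + μ.card - lam.card) : ℂ) *
              ∏ i ∈ lam.toFinset, (Nat.factorial (lam.count i - μ.count i) : ℂ))) •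
          mm ((lam.sum - μ.sum + k, 0) ::ₘ (μ.map (fun i => (i, 0)) +
              Multiset.replicate (lam.sum + k) ((0 : ℕ), (1 : ℕ))))
        else 0) ∈ Jbar := by
  have key := weightedMm_sub_reduction_mem hkl h0
  rw [weightedMm_eq_mm_of_pos hl hkl, reduction] at key
  convert key using 2
  · rfl
  exact Finset.sum_congr rfl fun μ hμ => (reductionCoeff_smul_weightedMm (k := k)
    (Multiset.mem_powerset.mp (Multiset.mem_toFinset.mp hμ))).symm
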